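/- Let A = (A0, A1, d, ·) be a finite-dimensional strict pre-Lie 2-algebra and let R ∈ (A0 ⊗ A1) ⊕ (A1 ⊗ A0) satisfy σ(R) = R, where σ is the flip of the two tensor factors. Write R01 ∈ A0 ⊗ A1 and R10 ∈ A1 ⊗ A0 for the components of R, and define R0 : A1* → A0 and R1 : A0* → A1 by ⟨ξ, R0(η)⟩ = (ξ ⊗ η)(R01) and ⟨η, R1(ξ)⟩ = (η ⊗ ξ)(R10) for ξ ∈ A0*, η ∈ A1*. Then R is a solution of the 2-graded classical Yang–Baxter equation in A (i.e. [[R,R]]_s = 0 in the semidirect product pre-Lie algebra A0 ⊕ A1, and (d ⊗ 1)(R10) = (1 ⊗ d)(R01)) if and only if (R0, R1) is an O-operator on the subadjacent strict Lie 2-algebra G(A) associated to the coregular representation (L0*, L1*) on the complex dᵀ : A0* → A1*; explicitly: R0 ∘ dᵀ = d ∘ R1; R0(L0*(R0 η)η' − L0*(R0 η')η) = [R0 η, R0 η'] for all η, η' ∈ A1*; and R1(L1*(R1 ξ)η − L0*(R0 η)ξ) = [R1 ξ, R0 η] for all ξ ∈ A0*, η ∈ A1*, where ⟨L0*(x)η,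 b⟩ = −⟨η, x·b⟩, ⟨L0*(x)ξ, y⟩ = −⟨ξ, x·y⟩, ⟨L1*(a)η, y⟩ = −⟨η, a·y⟩, [x,y] = x·y − y·x and [a,y] = a·y − y·a. -/

import Mathlib

namespace PreLie2

open Module TensorProduct

variable (K : Type*) [Field K]

/-- A two-argument map between modules is bilinear. -/
def IsBilin {M N P : Type*} [AddCommGroup M] [Module K M] [AddCommGroup N] [Module K N]
    [AddCommGroup P] [Module K P] (f : M → N → P) : Prop :=
  (∀ m, IsLinearMap K (f m)) ∧ ∀ n, IsLinearMap K fun m => f m n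

section TwoTerm

variable {A0 A1 : Type*} [AddCommGroup A0] [Module K A0] [AddCommGroup A1] [Module K A1]

/-- A strict pre-Lie `2`-algebra structure on the two-term complex `d : A1 → A0`. -/
structure IsStrictPreLie2 (d : A1 → A0) (m00 : A0 → A0 → A0)
    (m01 : A0 → A1 → A1) (m10 : A1 → A0 → A1) : Prop where
  d_lin : IsLinearMap K d
  m00_bilin : IsBilin K m00
  m01_bilin : IsBilin K m01
  m10_bilin : IsBilin K m10
  d_m01 : ∀ x a, d (m01 x a) = m00 x (d a)
  d_m10 : ∀ a x, d (m10 a x) = m00 (d a) x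
  d_mix : ∀ a b, m01 (d a) b = m10 a (d b)
  preLie0 : ∀ x y z, m00 x (m00 y z) - m00 (m00 x y) z = m00 y (m00 x z) - m00 (m00 y x) z
  preLie1 : ∀ x y a, m01 x (m01 y a) - m01 (m00 x y) a = m01 y (m01 x a) - m01 (m00 y x) a
  preLie2 : ∀ a x y, m10 a (m00 x y) - m10 (m10 a x) y = m01 x (m10 a y) - m10 (m01 x a) y

/-- A strict Lie `2`-algebra structure on the two-term complex `δ : A1 → A0`. -/
structure IsStrictLie2 (δ : A1 → A0) (br0 : A0 → A0 → A0) (br1 : A0 → A1 → A1) : Prop where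
  δ_lin : IsLinearMap K δ
  br0_bilin : IsBilin K br0
  br1_bilin : IsBilin K br1
  skew : ∀ x y, br0 x y = -br0 y x
  δ_br1 : ∀ x a, δ (br1 x a) = br0 x (δ a)
  br1_δ : ∀ a b, br1 (δ a) b = -br1 (δ b) a
  jacobi0 : ∀ x y z, br0 (br0 x y) z + br0 (br0 y z) x + br0 (br0 z x) y = 0
  jacobi1 : ∀ x y b, br1 x (br1 y b) - br1 y (br1 x b) - br1 (br0 x y) b = 0

/-- A strict associative `2`-algebra structure on the two-term complex `d : A1 → A0`. -/
structure IsStrictAssoc2 (d : A1 → A0) (m00 : A0 → A0 → A0)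
    (m01 : A0 → A1 → A1) (m10 : A1 → A0 → A1) : Prop where
  d_lin : IsLinearMap K d
  m00_bilin : IsBilin K m00
  m01_bilin : IsBilin K m01
  m10_bilin : IsBilin K m10
  d_m01 : ∀ x a, d (m01 x a) = m00 x (d a)
  d_m10 : ∀ a x, d (m10 a x) = m00 (d a) x
  d_mix : ∀ a b, m01 (d a) b = m10 a (d b)
  assoc000 : ∀ x y z, m00 x (m00 y z) = m00 (m00 x y) z
  assoc001 : ∀ x y a, m01 x (m01 y a) = m01 (m00 x y) a
  assoc010 : ∀ x a y, m01 x (m10 a y) = m10 (m01 x a) y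
  assoc100 : ∀ a x y, m10 a (m00 x y) = m10 (m10 a x) y

end TwoTerm

/-- A pre-Lie algebra structure. -/
structure IsPreLie {B : Type*} [AddCommGroup B] [Module K B] (mul : B → B → B) : Prop where
  bilin : IsBilin K mul
  preLie : ∀ x y z, mul (mul x y) z - mul x (mul y z) = mul (mul y x) z - mul y (mul x z)

section Rep

variable {g0 g1 V0 V1 : Type*}
  [AddCommGroup g0] [Module K g0] [AddCommGroup g1] [Module K g1]
  [AddCommGroup V0] [Module K V0] [AddCommGroup V1] [Module K V1]

/-- A strict representation of a strict Lie 2-algebra `(g0, g1, δ, br0, br1)` on the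
two-term complex `par : V1 → V0`. -/
structure IsStrictRepLie2 (δ : g1 → g0) (br0 : g0 → g0 → g0) (br1 : g0 → g1 → g1)
    (par : V1 → V0) (ρ00 : g0 → V0 → V0) (ρ01 : g0 → V1 → V1) (ρ1 : g1 → V0 → V1) : Prop where
  ρ00_bilin : IsBilin K ρ00
  ρ01_bilin : IsBilin K ρ01
  ρ1_bilin : IsBilin K ρ1
  chain : ∀ x m, ρ00 x (par m) = par (ρ01 x m)
  comp0 : ∀ a v, ρ00 (δ a) v = par (ρ1 a v)
  comp1 : ∀ a m, ρ01 (δ a) m = ρ1 a (par m)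
  rep00 : ∀ x y v, ρ00 (br0 x y) v = ρ00 x (ρ00 y v) - ρ00 y (ρ00 x v)
  rep01 : ∀ x y m, ρ01 (br0 x y) m = ρ01 x (ρ01 y m) - ρ01 y (ρ01 x m)
  rep1 : ∀ x a v, ρ1 (br1 x a) v = ρ01 x (ρ1 a v) - ρ1 a (ρ00 x v)

/-- A strict representation of a strict pre-Lie 2-algebra `(g0, g1, d, m00, m01, m10)` on the
two-term complex `par : V1 → V0`. -/
structure IsStrictRepPreLie2 (d : g1 → g0) (m00 : g0 → g0 → g0) (m01 : g0 → g1 → g1)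
    (m10 : g1 → g0 → g1) (par : V1 → V0)
    (ρ00 : g0 → V0 → V0) (ρ01 : g0 → V1 → V1) (ρ1 : g1 → V0 → V1)
    (μ00 : g0 → V0 → V0) (μ01 : g0 → V1 → V1) (μ1 : g1 → V0 → V1) : Prop where
  toRepLie : IsStrictRepLie2 K d (fun x y => m00 x y - m00 y x)
    (fun x a => m01 x a - m10 a x) par ρ00 ρ01 ρ1
  μ00_bilin : IsBilin K μ00
  μ01_bilin : IsBilin K μ01
  μ1_bilin : IsBilin K μ1
  μchain : ∀ x m, μ00 x (par m) = par (μ01 x m)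
  μcomp0 : ∀ a v, μ00 (d a) v = par (μ1 a v)
  μcomp1 : ∀ a m, μ01 (d a) m = μ1 a (par m)
  eqA0 : ∀ x y v, μ00 (m00 x y) v + μ00 y (ρ00 x v) - ρ00 x (μ00 y v) - μ00 y (μ00 x v) = 0
  eqA1 : ∀ x y m, μ01 (m00 x y) m + μ01 y (ρ01 x m) - ρ01 x (μ01 y m) - μ01 y (μ01 x m) = 0
  eqB : ∀ x a v, μ1 (m01 x a) v - ρ01 x (μ1 a v) + μ1 a (ρ00 x v) - μ1 a (μ00 x v) = 0
  eqC : ∀ a x v, μ1 (m10 a x) v - ρ1 a (μ00 x v) + μ01 x (ρ1 a v) - μ01 x (μ1 a v) = 0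

/-- An `O`-operator on a strict Lie 2-algebra associated to a strict representation. -/
structure IsOOperator (δ : g1 → g0) (br0 : g0 → g0 → g0) (br1 : g0 → g1 → g1)
    (par : V1 → V0) (ρ00 : g0 → V0 → V0) (ρ01 : g0 → V1 → V1) (ρ1 : g1 → V0 → V1)
    (T0 : V0 → g0) (T1 : V1 → g1) : Prop where
  T0_lin : IsLinearMap K T0
  T1_lin : IsLinearMap K T1
  chain : ∀ m, T0 (par m) = δ (T1 m)
  eq0 : ∀ u v, T0 (ρ00 (T0 u) v - ρ00 (T0 v) u) = br0 (T0 u) (T0 v)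
  eq1 : ∀ m v, T1 (ρ1 (T1 m) v - ρ01 (T0 v) m) = -br1 (T0 v) (T1 m)

end Rep

section Matched

variable {g0 g1 h0 h1 : Type*}
  [AddCommGroup g0] [Module K g0] [AddCommGroup g1] [Module K g1]
  [AddCommGroup h0] [Module K h0] [AddCommGroup h1] [Module K h1]

/-- A matched pair of strict Lie 2-algebras. -/
structure IsMatchedPairLie2
    (δ : g1 → g0) (br0 : g0 → g0 → g0) (br1 : g0 → g1 → g1)
    (δ' : h1 → h0) (br0' : h0 → h0 → h0) (br1' : h0 → h1 → h1)
    (ν00 : g0 → h0 → h0) (ν01 : g0 → h1 → h1) (ν1 : g1 → h0 → h1)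
    (ν00' : h0 → g0 → g0) (ν01' : h0 → g1 → g1) (ν1' : h1 → g0 → g1) : Prop where
  lie : IsStrictLie2 K δ br0 br1
  lie' : IsStrictLie2 K δ' br0' br1'
  rep : IsStrictRepLie2 K δ br0 br1 δ' ν00 ν01 ν1
  rep' : IsStrictRepLie2 K δ' br0' br1' δ ν00' ν01' ν1'
  eqL1 : ∀ x' x y, ν00' x' (br0 x y) =
      br0 x (ν00' x' y) + br0 (ν00' x' x) y + ν00' (ν00 y x') x - ν00' (ν00 x x') y
  eqL2 : ∀ x x' y', ν00 x (br0' x' y') =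
      br0' x' (ν00 x y') + br0' (ν00 x x') y' + ν00 (ν00' y' x) x' - ν00 (ν00' x' x) y'
  eqL3 : ∀ h' x y, ν1' h' (br0 x y) =
      br1 x (ν1' h' y) - br1 y (ν1' h' x) + ν1' (ν01 y h') x - ν1' (ν01 x h') y
  eqL4 : ∀ h x' y', ν1 h (br0' x' y') =
      br1' x' (ν1 h y') - br1' y' (ν1 h x') + ν1 (ν01' y' h) x' - ν1 (ν01' x' h) y'
  eqL5 : ∀ x' x h, ν01' x' (br1 x h) =
      br1 x (ν01' x' h) + br1 (ν00' x' x) h + ν1' (ν1 h x') x - ν01' (ν00 x x') h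
  eqL6 : ∀ x x' h', ν01 x (br1' x' h') =
      br1' x' (ν01 x h') + br1' (ν00 x x') h' + ν1 (ν1' h' x) x' - ν01 (ν00' x' x) h'

/-- A matched pair of strict pre-Lie 2-algebras. -/
structure IsMatchedPairPreLie2
    (d : g1 → g0) (m00 : g0 → g0 → g0) (m01 : g0 → g1 → g1) (m10 : g1 → g0 → g1)
    (d' : h1 → h0) (n00 : h0 → h0 → h0) (n01 : h0 → h1 → h1) (n10 : h1 → h0 → h1)
    (ρ00 : g0 → h0 → h0) (ρ01 : g0 → h1 → h1) (ρ1 : g1 → h0 → h1)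
    (μ00 : g0 → h0 → h0) (μ01 : g0 → h1 → h1) (μ1 : g1 → h0 → h1)
    (ρ00' : h0 → g0 → g0) (ρ01' : h0 → g1 → g1) (ρ1' : h1 → g0 → g1)
    (μ00' : h0 → g0 → g0) (μ01' : h0 → g1 → g1) (μ1' : h1 → g0 → g1) : Prop where
  alg : IsStrictPreLie2 K d m00 m01 m10
  alg' : IsStrictPreLie2 K d' n00 n01 n10
  rep : IsStrictRepPreLie2 K d m00 m01 m10 d' ρ00 ρ01 ρ1 μ00 μ01 μ1
  rep' : IsStrictRepPreLie2 K d' n00 n01 n10 d ρ00' ρ01' ρ1' μ00' μ01' μ1'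
  eqM1 : ∀ a' x y, μ1' a' (m00 x y - m00 y x) =
      m01 x (μ1' a' y) - m01 y (μ1' a' x) + μ1' (ρ01 y a') x - μ1' (ρ01 x a') y
  eqM2 : ∀ a x' y', μ1 a (n00 x' y' - n00 y' x') =
      n01 x' (μ1 a y') - n01 y' (μ1 a x') + μ1 (ρ01' y' a) x' - μ1 (ρ01' x' a) y'
  eqM3 : ∀ z' x y, μ00' z' (m00 x y - m00 y x) =
      m00 x (μ00' z' y) - m00 y (μ00' z' x) + μ00' (ρ00 y z') x - μ00' (ρ00 x z') y
  eqM4 : ∀ z x' y', μ00 z (n00 x' y' - n00 y' x') =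
      n00 x' (μ00 z y') - n00 y' (μ00 z x') + μ00 (ρ00' y' z) x' - μ00 (ρ00' x' z) y'
  eqM5 : ∀ y' x a, μ01' y' (m01 x a - m10 a x) =
      m01 x (μ01' y' a) - m10 a (μ00' y' x) + μ1' (ρ1 a y') x - μ01' (ρ00 x y') a
  eqM6 : ∀ y x' a', μ01 y (n01 x' a' - n10 a' x') =
      n01 x' (μ01 y a') - n10 a' (μ00 y x') + μ1 (ρ1' a' y) x' - μ01 (ρ00' x' y) a'
  eqM7 : ∀ x y' a', ρ01 x (n01 y' a') =
      n01 (ρ00 x y' - μ00 x y') a' + ρ01 (μ00' y' x - ρ00' y' x) a'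
        + n01 y' (ρ01 x a') + μ1 (μ1' a' x) y'
  eqM8 : ∀ x' y a, ρ01' x' (m01 y a) =
      m01 (ρ00' x' y - μ00' x' y) a + ρ01' (μ00 y x' - ρ00 y x') a
        + m01 y (ρ01' x' a) + μ1' (μ1 a x') y
  eqM9 : ∀ x a' y', ρ01 x (n10 a' y') =
      n10 (ρ01 x a' - μ01 x a') y' + ρ1 (μ1' a' x - ρ1' a' x) y'
        + n10 a' (ρ00 x y') + μ01 (μ00' y' x) a'
  eqM10 : ∀ x' a y, ρ01' x' (m10 a y) =
      m10 (ρ01' x' a - μ01' x' a) y + ρ1' (μ1 a x' - ρ1 a x') y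
        + m10 a (ρ00' x' y) + μ01' (μ00 y x') a
  eqM11 : ∀ a x' y', ρ1 a (n00 x' y') =
      n10 (ρ1 a x' - μ1 a x') y' + ρ1 (μ01' x' a - ρ01' x' a) y'
        + n01 x' (ρ1 a y') + μ1 (μ01' y' a) x'
  eqM12 : ∀ a' x y, ρ1' a' (m00 x y) =
      m10 (ρ1' a' x - μ1' a' x) y + ρ1' (μ01 x a' - ρ01 x a') y
        + m01 x (ρ1' a' y) + μ1' (μ01 y a') x
  eqM13 : ∀ x y' z', ρ00 x (n00 y' z') =
      n00 (ρ00 x y' - μ00 x y') z' + ρ00 (μ00' y' x - ρ00' y' x) z'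
        + n00 y' (ρ00 x z') + μ00 (μ00' z' x) y'
  eqM14 : ∀ x' y z, ρ00' x' (m00 y z) =
      m00 (ρ00' x' y - μ00' x' y) z + ρ00' (μ00 y x' - ρ00 y x') z
        + m00 y (ρ00' x' z) + μ00' (μ00 z x') y

end Matched

end PreLie2


namespace PreLie2

open Module TensorProduct

variable (K : Type*) [Field K]

section Tensor

variable {B : Type*} [AddCommGroup B] [Module K B]

set_option maxHeartbeats 1000000 in
/-- The quadrilinear map underlying the `2`-graded classical Yang-Baxter expression
`[[R,R]]_s` of a pre-Lie algebra product `s`.  For `R = Σᵢ uᵢ ⊗ vᵢ`, the value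
`[[R,R]]_s` is `Σᵢⱼ cybeTerm s uᵢ vᵢ uⱼ vⱼ`. -/
noncomputable def cybeTerm (s : B →ₗ[K] B →ₗ[K] B) :
    B →ₗ[K] B →ₗ[K] B →ₗ[K] B →ₗ[K] (B ⊗[K] (B ⊗[K] B)) :=
  LinearMap.mk₂ K
    (fun u v => LinearMap.mk₂ K
      (fun u' v' =>
        s u u' ⊗ₜ[K] (v' ⊗ₜ[K] v) - v' ⊗ₜ[K] (s u u' ⊗ₜ[K] v)
          + u' ⊗ₜ[K] ((s u v' - s v' u) ⊗ₜ[K] v)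
          - (s u v' - s v' u) ⊗ₜ[K] (u' ⊗ₜ[K] v)
          - u ⊗ₜ[K] (u' ⊗ₜ[K] (s v v' - s v' v)))
      (by
        intro u₁ u₂ v'
        simp only [map_add, LinearMap.add_apply, add_tmul, tmul_add, sub_tmul, tmul_sub]
        abel)
      (by
        intro c u' v'
        simp only [map_smul, LinearMap.smul_apply, sub_tmul, tmul_sub, add_tmul, tmul_add,
          tmul_smul, ← smul_tmul']
        module)
      (by
        intro v₁ v₂ u'
        simp only [map_add, LinearMap.add_apply, add_tmul, tmul_add, sub_tmul, tmul_sub]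
        abel)
      (by
        intro c v' u'
        simp only [map_smul, LinearMap.smul_apply, sub_tmul, tmul_sub, add_tmul, tmul_add,
          tmul_smul, ← smul_tmul']
        module))
    (by
      intro u₁ u₂ v
      refine LinearMap.ext fun u' => LinearMap.ext fun v' => ?_
      simp only [LinearMap.mk₂_apply, LinearMap.add_apply, map_add, add_tmul, tmul_add,
        sub_tmul, tmul_sub]
      abel)
    (by
      intro c u v
      refine LinearMap.ext fun u' => LinearMap.ext fun v' => ?_
      simp only [LinearMap.mk₂_apply, LinearMap.smul_apply, map_smul, sub_tmul, tmul_sub,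
        add_tmul, tmul_add, tmul_smul, ← smul_tmul']
      module)
    (by
      intro v₁ v₂ u
      refine LinearMap.ext fun u' => LinearMap.ext fun v' => ?_
      simp only [LinearMap.mk₂_apply, LinearMap.add_apply, map_add, add_tmul, tmul_add,
        sub_tmul, tmul_sub]
      abel)
    (by
      intro c v u
      refine LinearMap.ext fun u' => LinearMap.ext fun v' => ?_
      simp only [LinearMap.mk₂_apply, LinearMap.smul_apply, map_smul, sub_tmul, tmul_sub,
        add_tmul, tmul_add, tmul_smul, ← smul_tmul']
      module)

/-- The bilinear extension of `cybeTerm` to `B ⊗ B`; in particular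
`cybe s R R = [[R,R]]_s`. -/
noncomputable def cybe (s : B →ₗ[K] B →ₗ[K] B) :
    (B ⊗[K] B) →ₗ[K] (B ⊗[K] B) →ₗ[K] (B ⊗[K] (B ⊗[K] B)) :=
  TensorProduct.lift
    ((cybeTerm K s).compr₂ (TensorProduct.lift.equiv (RingHom.id K) B B (B ⊗[K] (B ⊗[K] B))).toLinearMap)

end Tensor

section SDP

variable {A0 A1 : Type*} [AddCommGroup A0] [Module K A0] [AddCommGroup A1] [Module K A1]

/-- The semidirect product pre-Lie algebra product on `A0 × A1` associated to a strict
pre-Lie 2-algebra `(A0, A1, d, m00, m01, m10)`: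
`(x+a) ∗ (y+b) = x·y + x·b + a·y`. -/
noncomputable def sdp (m00 : A0 →ₗ[K] A0 →ₗ[K] A0) (m01 : A0 →ₗ[K] A1 →ₗ[K] A1)
    (m10 : A1 →ₗ[K] A0 →ₗ[K] A1) : (A0 × A1) →ₗ[K] (A0 × A1) →ₗ[K] (A0 × A1) :=
  LinearMap.mk₂ K (fun p q => (m00 p.1 q.1, m01 p.1 q.2 + m10 p.2 q.1))
    (by
      intro p₁ p₂ q
      refine Prod.ext ?_ ?_ <;>
        simp only [Prod.fst_add, Prod.snd_add, map_add, LinearMap.add_apply] <;>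
        first | rfl | abel)
    (by
      intro c p q
      refine Prod.ext ?_ ?_ <;>
        simp only [Prod.smul_fst, Prod.smul_snd, map_smul, LinearMap.smul_apply, smul_add] <;>
        rfl)
    (by
      intro q₁ q₂ p
      refine Prod.ext ?_ ?_ <;>
        simp only [Prod.fst_add, Prod.snd_add, map_add] <;>
        first | rfl | abel)
    (by
      intro c q p
      refine Prod.ext ?_ ?_ <;>
        simp only [Prod.smul_fst, Prod.smul_snd, map_smul, smul_add] <;>
        rfl)

end SDP

end PreLie2

open PreLie2 Module LinearMap TensorProduct


namespace CYBEAux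

open PreLie2 Module LinearMap TensorProduct

variable {K : Type*} [Field K]

section CDefs
variable {M N : Type*} [AddCommGroup M] [Module K M] [AddCommGroup N] [Module K N]

/-- Contraction in the first slot: `c1 (u ⊗ v) ξ = ξ u • v`. -/
noncomputable def c1 : (M ⊗[K] N) →ₗ[K] Dual K M →ₗ[K] N :=
  TensorProduct.lift (LinearMap.mk₂ K
    (fun u v => ((LinearMap.applyₗ u : Dual K M →ₗ[K] K).smulRight v))
    (by intro u₁ u₂ v; ext ξ; simp [add_smul])
    (by intro c u v; ext ξ; simp [mul_smul])
    (by intro u v₁ v₂; ext ξ; simp [smul_add])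
    (by intro c u v; ext ξ; exact smul_comm _ _ _))

@[simp] lemma c1_tmul (u : M) (v : N) (ξ : Dual K M) :
    c1 (u ⊗ₜ[K] v) ξ = ξ u • v := rfl

/-- Contraction in the second slot: `c2 (u ⊗ v) η = η v • u`. -/
noncomputable def c2 : (M ⊗[K] N) →ₗ[K] Dual K N →ₗ[K] M :=
  c1 ∘ₗ (TensorProduct.comm K M N).toLinearMap

@[simp] lemma c2_tmul (u : M) (v : N) (η : Dual K N) :
    c2 (u ⊗ₜ[K] v) η = η v • u := rfl

end CDefs

section Sep
variable {M N : Type*} [AddCommGroup M] [Module K M] [AddCommGroup N] [Module K N]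
variable [FiniteDimensional K M] [FiniteDimensional K N]

lemma dualDistribEquiv_eq {M N : Type*} [AddCommGroup M] [Module K M] [AddCommGroup N]
    [Module K N] [FiniteDimensional K M] [FiniteDimensional K N] (z : Dual K M ⊗[K] Dual K N) :
    (TensorProduct.dualDistribEquiv K M N) z = dualDistrib K M N z := by
  simp [TensorProduct.dualDistribEquiv, TensorProduct.dualDistribEquivOfBasis]

lemma sep2 (t : M ⊗[K] N)
    (h : ∀ (f : Dual K M) (g : Dual K N), dualDistrib K M N (f ⊗ₜ[K] g) t = 0) :
    t = 0 := by
  rw [← Module.forall_dual_apply_eq_zero_iff K]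
  intro φ
  obtain ⟨z, rfl⟩ := (TensorProduct.dualDistribEquiv K M N).surjective φ
  rw [dualDistribEquiv_eq]
  induction z using TensorProduct.induction_on with
  | zero => simp
  | tmul f g => exact h f g
  | add a b ha hb => simp [map_add, ha, hb]

end Sep

variable {B : Type*} [AddCommGroup B] [Module K B]

/-- Triple dual pairing on `B ⊗ (B ⊗ B)`. -/
noncomputable def ev3 (ξ η ζ : Dual K B) : B ⊗[K] (B ⊗[K] B) →ₗ[K] K :=
  dualDistrib K B (B ⊗[K] B) (ξ ⊗ₜ[K] dualDistrib K B B (η ⊗ₜ[K] ζ))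

@[simp] lemma ev3_tmul (ξ η ζ : Dual K B) (a b c : B) :
    ev3 ξ η ζ (a ⊗ₜ[K] (b ⊗ₜ[K] c)) = ξ a * (η b * ζ c) := by
  simp [ev3]

lemma sep3 [FiniteDimensional K B] (t : B ⊗[K] (B ⊗[K] B))
    (h : ∀ ξ η ζ : Dual K B, ev3 ξ η ζ t = 0) : t = 0 := by
  apply sep2
  intro f g
  obtain ⟨z, rfl⟩ := (TensorProduct.dualDistribEquiv K B B).surjective g
  rw [dualDistribEquiv_eq]
  induction z using TensorProduct.induction_on with
  | zero =>
      have : (f ⊗ₜ[K] dualDistrib K B B (0 : Dual K B ⊗[K] Dual K B)) =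
          (0 : Dual K B ⊗[K] Dual K (B ⊗[K] B)) := by simp
      rw [this, map_zero]; rfl
  | tmul η ζ => exact h f η ζ
  | add a b ha hb =>
      have : (f ⊗ₜ[K] (dualDistrib K B B (a + b))) =
          f ⊗ₜ[K] dualDistrib K B B a + f ⊗ₜ[K] dualDistrib K B B b := by
        rw [map_add, TensorProduct.tmul_add]
      rw [this, map_add, LinearMap.add_apply, ha, hb, add_zero]


section Pairing
variable {B : Type*} [AddCommGroup B] [Module K B]

lemma cybe_tmul (s : B →ₗ[K] B →ₗ[K] B) (u v u' v' : B) :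
    cybe K s (u ⊗ₜ[K] v) (u' ⊗ₜ[K] v') =
      s u u' ⊗ₜ[K] (v' ⊗ₜ[K] v) - v' ⊗ₜ[K] (s u u' ⊗ₜ[K] v)
        + u' ⊗ₜ[K] ((s u v' - s v' u) ⊗ₜ[K] v)
        - (s u v' - s v' u) ⊗ₜ[K] (u' ⊗ₜ[K] v)
        - u ⊗ₜ[K] (u' ⊗ₜ[K] (s v v' - s v' v)) := rfl

lemma pairing_cybe (s : B →ₗ[K] B →ₗ[K] B) (r r' : B ⊗[K] B) (ξ η ζ : Dual K B) :
    ev3 ξ η ζ (cybe K s r r') =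
      ζ (c1 r (ξ ∘ₗ s.flip (c2 r' η))) - ζ (c1 r (η ∘ₗ s.flip (c2 r' ξ)))
        + ζ (c1 r (η ∘ₗ s.flip (c1 r' ξ))) - ζ (c1 r (η ∘ₗ s (c1 r' ξ)))
        - ζ (c1 r (ξ ∘ₗ s.flip (c1 r' η))) + ζ (c1 r (ξ ∘ₗ s (c1 r' η)))
        - ζ (s (c1 r ξ) (c1 r' η)) + ζ (s (c1 r' η) (c1 r ξ)) := by
  induction r using TensorProduct.induction_on with
  | zero => simp
  | add r₁ r₂ h₁ h₂ =>
      simp only [map_add, LinearMap.add_apply, h₁, h₂]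
      ring
  | tmul u v =>
      induction r' using TensorProduct.induction_on with
      | zero => simp
      | add r₁ r₂ h₁ h₂ =>
          simp only [map_add, LinearMap.add_apply, LinearMap.comp_add, h₁, h₂]
          ring
      | tmul u' v' =>
          rw [cybe_tmul]
          simp only [map_add, map_sub, LinearMap.add_apply, LinearMap.sub_apply,
            TensorProduct.sub_tmul, TensorProduct.tmul_sub, ev3_tmul, c1_tmul, c2_tmul,
            LinearMap.comp_apply, LinearMap.flip_apply, map_smul, smul_eq_mul,
            LinearMap.smul_apply]
          ring

end Pairing


section Inst

lemma dual_inj {V : Type*} [AddCommGroup V] [Module K V] {v w : V}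
    (h : ∀ φ : Dual K V, φ v = φ w) : v = w := by
  rw [← sub_eq_zero, ← Module.forall_dual_apply_eq_zero_iff K]
  intro φ; rw [map_sub, h φ, sub_self]

variable {M N P Q : Type*} [AddCommGroup M] [Module K M] [AddCommGroup N] [Module K N]
  [AddCommGroup P] [Module K P] [AddCommGroup Q] [Module K Q]

lemma dd_map (f : Dual K P) (g : Dual K Q) (φ : M →ₗ[K] P) (ψ : N →ₗ[K] Q) (t : M ⊗[K] N) :
    dualDistrib K P Q (f ⊗ₜ[K] g) (TensorProduct.map φ ψ t) =
      dualDistrib K M N ((f ∘ₗ φ) ⊗ₜ[K] (g ∘ₗ ψ)) t := by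
  induction t using TensorProduct.induction_on with
  | zero => simp
  | tmul u v => simp
  | add a b ha hb => simp [tmul_add, ha, hb]

lemma dd_comm (f : Dual K M) (g : Dual K N) (t : M ⊗[K] N) :
    dualDistrib K N M (g ⊗ₜ[K] f) (TensorProduct.comm K M N t) =
      dualDistrib K M N (f ⊗ₜ[K] g) t := by
  induction t using TensorProduct.induction_on with
  | zero => simp
  | tmul u v => simp [mul_comm]
  | add a b ha hb => simp [ha, hb]

variable {B : Type*} [AddCommGroup B] [Module K B]

lemma c1_map (φ : M →ₗ[K] B) (ψ : N →ₗ[K] B) (r : M ⊗[K] N) (Ξ Φ : Dual K B) :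
    Φ (c1 (TensorProduct.map φ ψ r) Ξ) = dualDistrib K M N ((Ξ ∘ₗ φ) ⊗ₜ[K] (Φ ∘ₗ ψ)) r := by
  induction r using TensorProduct.induction_on with
  | zero => simp
  | tmul u v => simp
  | add a b ha hb => simp [ha, hb]

lemma c2_map (φ : M →ₗ[K] B) (ψ : N →ₗ[K] B) (r : M ⊗[K] N) (Ξ Φ : Dual K B) :
    Φ (c2 (TensorProduct.map φ ψ r) Ξ) = dualDistrib K M N ((Φ ∘ₗ φ) ⊗ₜ[K] (Ξ ∘ₗ ψ)) r := by
  induction r using TensorProduct.induction_on with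
  | zero => simp
  | tmul u v => simp [mul_comm]
  | add a b ha hb => simp [ha, hb]

end Inst

section Components

variable {A0 A1 : Type*} [AddCommGroup A0] [Module K A0] [AddCommGroup A1] [Module K A1]

/-- The map `B* → B` induced by `(R0, R1)`. -/
noncomputable def Tmap (R0 : Dual K A1 →ₗ[K] A0) (R1 : Dual K A0 →ₗ[K] A1) :
    Dual K (A0 × A1) →ₗ[K] A0 × A1 :=
  LinearMap.prod (R0 ∘ₗ LinearMap.lcomp K K (LinearMap.inr K A0 A1))
    (R1 ∘ₗ LinearMap.lcomp K K (LinearMap.inl K A0 A1))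

@[simp] lemma Tmap_apply (R0 : Dual K A1 →ₗ[K] A0) (R1 : Dual K A0 →ₗ[K] A1)
    (Ξ : Dual K (A0 × A1)) :
    Tmap R0 R1 Ξ = (R0 (Ξ ∘ₗ LinearMap.inr K A0 A1), R1 (Ξ ∘ₗ LinearMap.inl K A0 A1)) := rfl

@[simp] lemma sdp_apply (m00 : A0 →ₗ[K] A0 →ₗ[K] A0) (m01 : A0 →ₗ[K] A1 →ₗ[K] A1)
    (m10 : A1 →ₗ[K] A0 →ₗ[K] A1) (p q : A0 × A1) :
    sdp K m00 m01 m10 p q = (m00 p.1 q.1, m01 p.1 q.2 + m10 p.2 q.1) := rfl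

lemma dual_prod_eq (Φ : Dual K (A0 × A1)) (p : A0 × A1) :
    Φ p = Φ (LinearMap.inl K A0 A1 p.1) + Φ (LinearMap.inr K A0 A1 p.2) := by
  rw [← map_add]; congr; simp

lemma c_eq_Tmap [FiniteDimensional K A0] [FiniteDimensional K A1]
    (R01 : A0 ⊗[K] A1) (R10 : A1 ⊗[K] A0)
    (hsym : TensorProduct.comm K A0 A1 R01 = R10)
    (R0 : Dual K A1 →ₗ[K] A0) (R1 : Dual K A0 →ₗ[K] A1)
    (hR0 : ∀ (ξ : Dual K A0) (η : Dual K A1),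
      ξ (R0 η) = dualDistrib K A0 A1 (ξ ⊗ₜ[K] η) R01)
    (hR1 : ∀ (η : Dual K A1) (ξ : Dual K A0),
      η (R1 ξ) = dualDistrib K A1 A0 (η ⊗ₜ[K] ξ) R10)
    (Ξ : Dual K (A0 × A1)) :
    c1 (TensorProduct.map (LinearMap.inl K A0 A1) (LinearMap.inr K A0 A1) R01
        + TensorProduct.map (LinearMap.inr K A0 A1) (LinearMap.inl K A0 A1) R10) Ξ
      = Tmap R0 R1 Ξ ∧
    c2 (TensorProduct.map (LinearMap.inl K A0 A1) (LinearMap.inr K A0 A1) R01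
        + TensorProduct.map (LinearMap.inr K A0 A1) (LinearMap.inl K A0 A1) R10) Ξ
      = Tmap R0 R1 Ξ := by
  have key1 : ∀ (f : Dual K A0) (g : Dual K A1),
      dualDistrib K A1 A0 (g ⊗ₜ[K] f) R10 = dualDistrib K A0 A1 (f ⊗ₜ[K] g) R01 := by
    intro f g; rw [← hsym, dd_comm]
  constructor
  · apply dual_inj (K := K)
    intro Φ
    rw [map_add, LinearMap.add_apply, map_add, c1_map, c1_map]
    rw [dual_prod_eq Φ (Tmap R0 R1 Ξ)]
    simp only [Tmap_apply]
    rw [← LinearMap.comp_apply Φ, ← LinearMap.comp_apply Φ, hR0, hR1]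
    rw [key1, key1, add_comm]
  · apply dual_inj (K := K)
    intro Φ
    rw [map_add, LinearMap.add_apply, map_add, c2_map, c2_map]
    rw [dual_prod_eq Φ (Tmap R0 R1 Ξ)]
    simp only [Tmap_apply]
    rw [← LinearMap.comp_apply Φ, ← LinearMap.comp_apply Φ, hR0, hR1]

end Components


section Fq

variable {A0 A1 : Type*} [AddCommGroup A0] [Module K A0] [AddCommGroup A1] [Module K A1]
variable (m00 : A0 →ₗ[K] A0 →ₗ[K] A0) (m01 : A0 →ₗ[K] A1 →ₗ[K] A1)
  (m10 : A1 →ₗ[K] A0 →ₗ[K] A1)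
  (R0 : Dual K A1 →ₗ[K] A0) (R1 : Dual K A0 →ₗ[K] A1)

/-- The obstruction for `(R0, R1)` to be an O-operator, at the level of `B = A0 × A1`. -/
noncomputable def Fq (Ξ H : Dual K (A0 × A1)) : A0 × A1 :=
  Tmap R0 R1 (Ξ ∘ₗ sdp K m00 m01 m10 (Tmap R0 R1 H))
    - Tmap R0 R1 (H ∘ₗ sdp K m00 m01 m10 (Tmap R0 R1 Ξ))
    - sdp K m00 m01 m10 (Tmap R0 R1 Ξ) (Tmap R0 R1 H)
    + sdp K m00 m01 m10 (Tmap R0 R1 H) (Tmap R0 R1 Ξ)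

lemma Fq_anti (Ξ H : Dual K (A0 × A1)) :
    Fq m00 m01 m10 R0 R1 Ξ H = - Fq m00 m01 m10 R0 R1 H Ξ := by
  simp only [Fq]; abel

lemma Fq_add_left (Ξ₁ Ξ₂ H : Dual K (A0 × A1)) :
    Fq m00 m01 m10 R0 R1 (Ξ₁ + Ξ₂) H
      = Fq m00 m01 m10 R0 R1 Ξ₁ H + Fq m00 m01 m10 R0 R1 Ξ₂ H := by
  simp only [Fq, map_add, LinearMap.add_apply, LinearMap.add_comp, LinearMap.comp_add]
  abel

lemma Fq_add_right (Ξ H₁ H₂ : Dual K (A0 × A1)) :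
    Fq m00 m01 m10 R0 R1 Ξ (H₁ + H₂)
      = Fq m00 m01 m10 R0 R1 Ξ H₁ + Fq m00 m01 m10 R0 R1 Ξ H₂ := by
  simp only [Fq, map_add, LinearMap.add_apply, LinearMap.add_comp, LinearMap.comp_add]
  abel

lemma comp_fst_inl (ξ : Dual K A0) :
    (ξ ∘ₗ LinearMap.fst K A0 A1) ∘ₗ LinearMap.inl K A0 A1 = ξ := by ext x; rfl

lemma comp_fst_inr (ξ : Dual K A0) :
    (ξ ∘ₗ LinearMap.fst K A0 A1) ∘ₗ LinearMap.inr K A0 A1 = 0 := by ext a; simp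

lemma comp_snd_inl (η : Dual K A1) :
    (η ∘ₗ LinearMap.snd K A0 A1) ∘ₗ LinearMap.inl K A0 A1 = 0 := by ext x; simp

lemma comp_snd_inr (η : Dual K A1) :
    (η ∘ₗ LinearMap.snd K A0 A1) ∘ₗ LinearMap.inr K A0 A1 = η := by ext a; rfl

lemma Tmap_fst (ξ : Dual K A0) :
    Tmap R0 R1 (ξ ∘ₗ LinearMap.fst K A0 A1) = (0, R1 ξ) := by
  rw [Tmap_apply, comp_fst_inl, comp_fst_inr, map_zero]

lemma Tmap_snd (η : Dual K A1) :
    Tmap R0 R1 (η ∘ₗ LinearMap.snd K A0 A1) = (R0 η, 0) := by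
  rw [Tmap_apply, comp_snd_inl, comp_snd_inr, map_zero]

lemma Fq00 (ξ ξ' : Dual K A0) :
    Fq m00 m01 m10 R0 R1 (ξ ∘ₗ LinearMap.fst K A0 A1) (ξ' ∘ₗ LinearMap.fst K A0 A1) = 0 := by
  have e1 : ∀ ζ ζ' : Dual K A0,
      (ζ ∘ₗ LinearMap.fst K A0 A1) ∘ₗ sdp K m00 m01 m10 ((0 : A0), R1 ζ') = 0 := by
    intro ζ ζ'; ext p <;> simp
  simp only [Fq, Tmap_fst, e1, map_zero, sdp_apply]
  simp

lemma Fq11 (η η' : Dual K A1) :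
    Fq m00 m01 m10 R0 R1 (η ∘ₗ LinearMap.snd K A0 A1) (η' ∘ₗ LinearMap.snd K A0 A1)
      = (R0 (η ∘ₗ m01 (R0 η') - η' ∘ₗ m01 (R0 η))
          - (m00 (R0 η) (R0 η') - m00 (R0 η') (R0 η)), 0) := by
  have e1 : ∀ ζ ζ' : Dual K A1,
      (ζ ∘ₗ LinearMap.snd K A0 A1) ∘ₗ sdp K m00 m01 m10 ((R0 ζ' : A0), (0 : A1))
        = (ζ ∘ₗ m01 (R0 ζ')) ∘ₗ LinearMap.snd K A0 A1 := by
    intro ζ ζ'; ext p <;> simp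
  simp only [Fq, Tmap_snd, e1, sdp_apply, map_zero, map_sub]
  ext <;> simp <;> abel

lemma Fq01 (ξ : Dual K A0) (η : Dual K A1) :
    Fq m00 m01 m10 R0 R1 (ξ ∘ₗ LinearMap.fst K A0 A1) (η ∘ₗ LinearMap.snd K A0 A1)
      = (0, R1 (ξ ∘ₗ m00 (R0 η) - η ∘ₗ m10 (R1 ξ))
          - (m10 (R1 ξ) (R0 η) - m01 (R0 η) (R1 ξ))) := by
  have e1 : (ξ ∘ₗ LinearMap.fst K A0 A1) ∘ₗ sdp K m00 m01 m10 ((R0 η : A0), (0 : A1))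
      = (ξ ∘ₗ m00 (R0 η)) ∘ₗ LinearMap.fst K A0 A1 := by
    ext p <;> simp
  have e2 : (η ∘ₗ LinearMap.snd K A0 A1) ∘ₗ sdp K m00 m01 m10 ((0 : A0), R1 ξ)
      = (η ∘ₗ m10 (R1 ξ)) ∘ₗ LinearMap.fst K A0 A1 := by
    ext p <;> simp
  simp only [Fq, Tmap_fst, Tmap_snd, e1, e2, sdp_apply, map_sub]
  ext <;> simp <;> abel

lemma dual_decomp (Ξ : Dual K (A0 × A1)) :
    Ξ = (Ξ ∘ₗ LinearMap.inl K A0 A1) ∘ₗ LinearMap.fst K A0 A1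
      + (Ξ ∘ₗ LinearMap.inr K A0 A1) ∘ₗ LinearMap.snd K A0 A1 := by
  apply LinearMap.ext; rintro ⟨x, a⟩
  simp only [LinearMap.add_apply, LinearMap.comp_apply, LinearMap.fst_apply,
    LinearMap.snd_apply, LinearMap.inl_apply, LinearMap.inr_apply]
  rw [← map_add]
  norm_num

end Fq

end CYBEAux

/-- for a symmetric `R ∈ (A0 ⊗ A1) ⊕ (A1 ⊗ A0)`, `R` is a solution of the
`2`-graded classical Yang–Baxter equation in the strict pre-Lie 2-algebra `A` iff
`(R0, R1)` is an `O`-operator on the subadjacent strict Lie 2-algebra `G(A)` associated to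
the coregular representation `(L0*, L1*)` on the dual complex `dᵀ : A0* → A1*`. -/
theorem graded_cybe_iff_O_operator
    {K : Type*} [Field K] [CharZero K]
    {A0 A1 : Type*} [AddCommGroup A0] [Module K A0] [FiniteDimensional K A0]
    [AddCommGroup A1] [Module K A1] [FiniteDimensional K A1]
    (d : A1 →ₗ[K] A0) (m00 : A0 →ₗ[K] A0 →ₗ[K] A0) (m01 : A0 →ₗ[K] A1 →ₗ[K] A1)
    (m10 : A1 →ₗ[K] A0 →ₗ[K] A1)
    (hA : IsStrictPreLie2 K (⇑d) (fun x y => m00 x y) (fun x a => m01 x a) (fun a x => m10 a x))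
    -- the two graded components of `R`
    (R01 : A0 ⊗[K] A1) (R10 : A1 ⊗[K] A0)
    -- `σ(R) = R`
    (hsym : TensorProduct.comm K A0 A1 R01 = R10)
    -- the maps `R0 : A1* → A0` and `R1 : A0* → A1` induced by `R`
    (R0 : Dual K A1 →ₗ[K] A0) (R1 : Dual K A0 →ₗ[K] A1)
    (hR0 : ∀ (ξ : Dual K A0) (η : Dual K A1),
      ξ (R0 η) = dualDistrib K A0 A1 (ξ ⊗ₜ[K] η) R01)
    (hR1 : ∀ (η : Dual K A1) (ξ : Dual K A0),
      η (R1 ξ) = dualDistrib K A1 A0 (η ⊗ₜ[K] ξ) R10) :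
    -- `[[R,R]]_s = 0` in the semidirect product pre-Lie algebra `A0 ⊕ A1`, together with
    -- `(d ⊗ 1)(R10) = (1 ⊗ d)(R01)`
    (cybe K (sdp K m00 m01 m10)
        (TensorProduct.map (LinearMap.inl K A0 A1) (LinearMap.inr K A0 A1) R01
          + TensorProduct.map (LinearMap.inr K A0 A1) (LinearMap.inl K A0 A1) R10)
        (TensorProduct.map (LinearMap.inl K A0 A1) (LinearMap.inr K A0 A1) R01
          + TensorProduct.map (LinearMap.inr K A0 A1) (LinearMap.inl K A0 A1) R10) = 0
      ∧ TensorProduct.map d LinearMap.id R10 = TensorProduct.map LinearMap.id d R01)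
    ↔
    -- `(R0, R1)` is an `O`-operator on `G(A)` for the coregular representation
    IsOOperator K (⇑d) (fun x y => m00 x y - m00 y x) (fun x a => m01 x a - m10 a x)
      (fun ξ : Dual K A0 => d.dualMap ξ)
      (fun (x : A0) (η : Dual K A1) => -(η ∘ₗ m01 x))
      (fun (x : A0) (ξ : Dual K A0) => -(ξ ∘ₗ m00 x))
      (fun (a : A1) (η : Dual K A1) => -(η ∘ₗ m10 a))
      (fun η => R0 η) (fun ξ => R1 ξ) := by
  set s := sdp K m00 m01 m10 with hs
  set RB := TensorProduct.map (LinearMap.inl K A0 A1) (LinearMap.inr K A0 A1) R01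
      + TensorProduct.map (LinearMap.inr K A0 A1) (LinearMap.inl K A0 A1) R10 with hRB
  set T := CYBEAux.Tmap R0 R1 with hT
  have hc1 : ∀ Ξ, CYBEAux.c1 RB Ξ = T Ξ :=
    fun Ξ => (CYBEAux.c_eq_Tmap R01 R10 hsym R0 R1 hR0 hR1 Ξ).1
  have hc2 : ∀ Ξ, CYBEAux.c2 RB Ξ = T Ξ :=
    fun Ξ => (CYBEAux.c_eq_Tmap R01 R10 hsym R0 R1 hR0 hR1 Ξ).2
  have hev : ∀ Ξ H Z : Dual K (A0 × A1),
      CYBEAux.ev3 Ξ H Z (cybe K s RB RB) = Z (CYBEAux.Fq m00 m01 m10 R0 R1 Ξ H) := by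
    intro Ξ H Z
    rw [CYBEAux.pairing_cybe]
    simp only [hc1, hc2, CYBEAux.Fq, map_sub, map_add, ← hT, ← hs]
    ring_nf
  have key : cybe K s RB RB = 0 ↔ ∀ Ξ H, CYBEAux.Fq m00 m01 m10 R0 R1 Ξ H = 0 := by
    constructor
    · intro h Ξ H
      apply CYBEAux.dual_inj (K := K); intro Z
      rw [map_zero, ← hev Ξ H Z, h, map_zero]
    · intro h
      apply CYBEAux.sep3
      intro Ξ H Z
      rw [hev, h, map_zero]
  have hdec : (∀ Ξ H, CYBEAux.Fq m00 m01 m10 R0 R1 Ξ H = 0) ↔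
      ((∀ η η' : Dual K A1, CYBEAux.Fq m00 m01 m10 R0 R1
          (η ∘ₗ LinearMap.snd K A0 A1) (η' ∘ₗ LinearMap.snd K A0 A1) = 0)
        ∧ (∀ (ξ : Dual K A0) (η : Dual K A1), CYBEAux.Fq m00 m01 m10 R0 R1
          (ξ ∘ₗ LinearMap.fst K A0 A1) (η ∘ₗ LinearMap.snd K A0 A1) = 0)) := by
    constructor
    · exact fun h => ⟨fun η η' => h _ _, fun ξ η => h _ _⟩
    · rintro ⟨h1, h2⟩ Ξ H
      have hBC : CYBEAux.Fq m00 m01 m10 R0 R1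
          ((Ξ ∘ₗ LinearMap.inr K A0 A1) ∘ₗ LinearMap.snd K A0 A1)
          ((H ∘ₗ LinearMap.inl K A0 A1) ∘ₗ LinearMap.fst K A0 A1) = 0 := by
        rw [CYBEAux.Fq_anti, h2, neg_zero]
      rw [show CYBEAux.Fq m00 m01 m10 R0 R1 Ξ H = CYBEAux.Fq m00 m01 m10 R0 R1
            ((Ξ ∘ₗ LinearMap.inl K A0 A1) ∘ₗ LinearMap.fst K A0 A1
              + (Ξ ∘ₗ LinearMap.inr K A0 A1) ∘ₗ LinearMap.snd K A0 A1)
            ((H ∘ₗ LinearMap.inl K A0 A1) ∘ₗ LinearMap.fst K A0 A1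
              + (H ∘ₗ LinearMap.inr K A0 A1) ∘ₗ LinearMap.snd K A0 A1) from by
          rw [← CYBEAux.dual_decomp, ← CYBEAux.dual_decomp]]
      rw [CYBEAux.Fq_add_left, CYBEAux.Fq_add_right, CYBEAux.Fq_add_right,
        CYBEAux.Fq00, h2, hBC, h1]
      simp
  have hchain : (TensorProduct.map d LinearMap.id R10 = TensorProduct.map LinearMap.id d R01)
      ↔ ∀ ξ : Dual K A0, R0 (d.dualMap ξ) = d (R1 ξ) := by
    have hdm : ∀ ζ : Dual K A0, d.dualMap ζ = ζ ∘ₗ d := fun _ => rfl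
    constructor
    · intro h ξ'
      apply CYBEAux.dual_inj (K := K); intro ξ
      have h2 := congrArg (fun t => dualDistrib K A0 A0 (ξ ⊗ₜ[K] ξ') t) h
      simp only [CYBEAux.dd_map, LinearMap.comp_id] at h2
      rw [hR0, hdm]
      rw [← h2, ← hR1 (ξ ∘ₗ d) ξ']
      rfl
    · intro h
      rw [← sub_eq_zero]
      apply CYBEAux.sep2
      intro f g
      rw [map_sub, CYBEAux.dd_map, CYBEAux.dd_map, LinearMap.comp_id, LinearMap.comp_id]
      rw [← hR1 (f ∘ₗ d) g, ← hR0 f (g ∘ₗ d)]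
      have : (f ∘ₗ d) (R1 g) = f (d (R1 g)) := rfl
      rw [this, ← hdm g, ← h g]
      simp [sub_self]
  constructor
  · rintro ⟨hY, hD⟩
    obtain ⟨h11, h01⟩ := hdec.mp (key.mp hY)
    refine ⟨R0.isLinear, R1.isLinear, fun ξ => (hchain.mp hD) ξ, ?_, ?_⟩
    · intro η η'
      have h0 := h11 η η'
      rw [CYBEAux.Fq11, Prod.ext_iff] at h0
      have h0' := h0.1
      simp only [Prod.fst_zero, sub_eq_zero] at h0'
      show R0 (-(η' ∘ₗ m01 (R0 η)) - -(η ∘ₗ m01 (R0 η'))) = _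
      rw [neg_sub_neg]
      exact h0'
    · intro ξ η
      have h0 := h01 ξ η
      rw [CYBEAux.Fq01, Prod.ext_iff] at h0
      have h0' := h0.2
      simp only [Prod.snd_zero, sub_eq_zero] at h0'
      show R1 (-(η ∘ₗ m10 (R1 ξ)) - -(ξ ∘ₗ m00 (R0 η))) = -(m01 (R0 η) (R1 ξ) - m10 (R1 ξ) (R0 η))
      rw [neg_sub_neg, neg_sub]
      exact h0'
  · rintro ⟨_, _, hch, he0, he1⟩
    refine ⟨key.mpr (hdec.mpr ⟨?_, ?_⟩), hchain.mpr (fun ξ => hch ξ)⟩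
    · intro η η'
      rw [CYBEAux.Fq11, Prod.ext_iff]
      refine ⟨?_, rfl⟩
      simp only [Prod.fst_zero, sub_eq_zero]
      have := he0 η η'
      simp only [neg_sub_neg] at this
      exact this
    · intro ξ η
      rw [CYBEAux.Fq01, Prod.ext_iff]
      refine ⟨rfl, ?_⟩
      simp only [Prod.snd_zero, sub_eq_zero]
      have := he1 ξ η
      simp only [neg_sub_neg, neg_sub] at this
      exact this
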